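/- arXiv:2311.06901 — 4 statements merged into one kernel-verified Lean document; each statement's English description precedes it below -/
import Mathlib

section
/- Let I be a nonempty set of non-negative integers and let S ⊆ ℕ^(I) be a gap absorbing monoid. Then for every s ∈ S \ {0} and every i ∈ I, ℓ(s) ≤ ℓ(s + e_i) ≤ ℓ(s) + 1. In particular, for every t ∈ (s + ℕ^(I)), the inequality ℓ(s) ≤ ℓ(t) holds. -/
open Pointwise

section Defs

variable {M : Type*} [AddCommMonoid M] [PartialOrder M]

/-- `S* = S \ {0}`. -/
def Sstar (S : AddSubmonoid M) : Set M := (S : Set M) \ {0}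

/-- The set of gaps `H(S)`, the complement of `S`. -/
def Gaps (S : AddSubmonoid M) : Set M := (S : Set M)ᶜ

/-- The set of atoms `A(S) = S* \ (S* + S*)`. -/
def Atoms (S : AddSubmonoid M) : Set M := Sstar S \ (Sstar S + Sstar S)

/-- `S` is an ideal extension: `S* + M ⊆ S*`. -/
def IsIdealExtension (S : AddSubmonoid M) : Prop :=
  ∀ s ∈ Sstar S, ∀ x : M, s + x ∈ Sstar S

/-- `S` is gap absorbing. -/
def IsGapAbsorbing (S : AddSubmonoid M) : Prop :=
  Gaps S + Gaps S ⊆ Gaps S ∪ Atoms S ∪ (Atoms S + Atoms S) ∧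
  Gaps S + Atoms S ⊆ Atoms S ∪ (Atoms S + Atoms S)

/-- `M(S)`: minimal elements of `S*` with respect to `≤`. -/
def Mins (S : AddSubmonoid M) : Set M :=
  {m | m ∈ Sstar S ∧ ∀ t ∈ Sstar S, t ≤ m → t = m}

/-- `n`-fold sumset, with `0`-fold sumset `{0}`. -/
def nfold : ℕ → Set M → Set M
  | 0, _ => {0}
  | n + 1, X => nfold n X + X

/-- The set of lengths `L(s) = {n : s ∈ nA(S)}`. -/
def Lset (S : AddSubmonoid M) (s : M) : Set ℕ := {n | s ∈ nfold n (Atoms S)}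

/-- The minimal factorization length `ℓ(s)`. -/
noncomputable def minLen (S : AddSubmonoid M) (s : M) : ℕ := sInf (Lset S s)

/-- `X` is closed under intervals. -/
def ClosedUnderIntervals (X : Set M) : Prop :=
  ∀ u ∈ X, ∀ v ∈ X, u ≤ v → Set.Icc u v ⊆ X

/-- `a ≤_S b`, i.e. `b - a ∈ S`. -/
def dvdS (S : AddSubmonoid M) (a b : M) : Prop := ∃ t ∈ S, a + t = b

end Defs

/-!
The condition `H(S) + A(S) ⊆ A(S) ∪ 2A(S)` lets a gap be merged into any atom at the cost of at
most one extra atom. In particular `S*` is an ideal of `ℕ^(I)`. Removing `e_i` from an atom `b`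
with `b_i > 0` of a shortest factorization of `s + e_i` leaves zero, an atom (because `S*` is an
ideal), or a gap, which another atom absorbs; either way `s` gets a factorization that is no
longer. Conversely, adding `e_i`, which is an atom or a gap, to a shortest factorization of `s`
costs at most one atom. The last claim follows by adding unit vectors one at a time.
-/

section AddCommMonoid

variable {M : Type*} [AddCommMonoid M] {S : AddSubmonoid M}

theorem nfold_eq_nsmul (X : Set M) : ∀ n, nfold n X = n • X
  | 0 => (zero_nsmul X).symm
  | n + 1 => by rw [nfold, succ_nsmul, nfold_eq_nsmul X n]

theorem mem_Lset_iff {s : M} {n : ℕ} : n ∈ Lset S s ↔ s ∈ n • Atoms S := by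
  rw [← nfold_eq_nsmul]
  rfl

theorem atoms_subset : Atoms S ⊆ S := fun _ ha => ha.1.1

theorem nsmul_atoms_subset : ∀ n : ℕ, n • Atoms S ⊆ S
  | 0 => by simp
  | n + 1 => by
    rw [succ_nsmul]
    rintro _ ⟨r, hr, a, ha, rfl⟩
    exact S.add_mem (nsmul_atoms_subset n hr) (atoms_subset ha)

theorem minLen_le_of_mem {s : M} {n : ℕ} (h : s ∈ n • Atoms S) : minLen S s ≤ n :=
  Nat.sInf_le (mem_Lset_iff.2 h)

theorem minLen_zero : minLen S 0 = 0 :=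
  Nat.le_zero.mp <| minLen_le_of_mem (zero_nsmul (Atoms S) ▸ rfl)

theorem minLen_eq_zero_of_notMem {s : M} (hs : s ∉ S) : minLen S s = 0 := by
  refine (congrArg sInf (Set.eq_empty_of_forall_notMem fun n hn => hs ?_)).trans Nat.sInf_empty
  exact nsmul_atoms_subset n (mem_Lset_iff.1 hn)

theorem mem_nsmul_minLen {s : M} (h : ∃ n : ℕ, s ∈ n • Atoms S) : s ∈ minLen S s • Atoms S := by
  obtain ⟨n, hn⟩ := h
  exact mem_Lset_iff.1 (Nat.sInf_mem ⟨n, mem_Lset_iff.2 hn⟩)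

variable (hGA : Gaps S + Atoms S ⊆ Atoms S ∪ (Atoms S + Atoms S))
include hGA

theorem add_atom_mem_of_notMem {x a : M} (hx : x ∉ S) (ha : a ∈ Atoms S) : x + a ∈ S := by
  rcases hGA (Set.add_mem_add hx ha) with h | ⟨a₁, ha₁, a₂, ha₂, h⟩
  · exact atoms_subset h
  · exact h ▸ S.add_mem (atoms_subset ha₁) (atoms_subset ha₂)

theorem add_atom_add_mem {r a : M} (hr : r ∈ S) (ha : a ∈ Atoms S) (x : M) : r + a + x ∈ S := by
  by_cases hx : x ∈ S
  · exact S.add_mem (S.add_mem hr (atoms_subset ha)) hx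
  · rw [add_assoc, add_comm a]
    exact S.add_mem hr (add_atom_mem_of_notMem hGA hx ha)

theorem minLen_add_notMem_add_atom_le {r x a : M} {k : ℕ} (hr : r ∈ k • Atoms S) (hx : x ∉ S)
    (ha : a ∈ Atoms S) : minLen S (r + (x + a)) ≤ k + 2 := by
  rcases hGA (Set.add_mem_add hx ha) with h | ⟨a₁, ha₁, a₂, ha₂, h⟩
  · exact (minLen_le_of_mem (succ_nsmul (Atoms S) k ▸ Set.add_mem_add hr h)).trans (by omega)
  · refine minLen_le_of_mem ?_
    rw [← h, ← add_assoc, succ_nsmul, succ_nsmul]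
    exact Set.add_mem_add (Set.add_mem_add hr ha₁) ha₂

end AddCommMonoid

section Finsupp

variable {ι : Type*} {S : AddSubmonoid (ι →₀ ℕ)}

theorem exists_mem_nsmul_atoms {s : ι →₀ ℕ} (hs : s ∈ S) : ∃ n : ℕ, s ∈ n • Atoms S := by
  induction s using WellFoundedLT.induction with
  | _ s ih =>
  by_cases hs0 : s = 0
  · exact ⟨0, by simp [hs0]⟩
  by_cases hA : s ∈ Atoms S
  · exact ⟨1, by simpa using hA⟩
  obtain ⟨u, hu, v, hv, rfl⟩ : s ∈ Sstar S + Sstar S := by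
    by_contra h
    exact hA ⟨⟨hs, hs0⟩, h⟩
  obtain ⟨m, hm⟩ := ih u (lt_add_of_pos_right u (pos_iff_ne_zero.2 hv.2)) hu.1
  obtain ⟨n, hn⟩ := ih v (lt_add_of_pos_left v (pos_iff_ne_zero.2 hu.2)) hv.1
  exact ⟨m + n, add_nsmul (Atoms S) m n ▸ Set.add_mem_add hm hn⟩

theorem mem_nsmul_minLen_of_mem {s : ι →₀ ℕ} (hs : s ∈ S) : s ∈ minLen S s • Atoms S :=
  mem_nsmul_minLen (exists_mem_nsmul_atoms hs)

theorem exists_eq_add_atom {s : ι →₀ ℕ} (hs : s ∈ S) (hs0 : s ≠ 0) :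
    ∃ k, minLen S s = k + 1 ∧ ∃ r ∈ k • Atoms S, ∃ a ∈ Atoms S, r + a = s := by
  have h := mem_nsmul_minLen_of_mem hs
  obtain ⟨k, hk⟩ : ∃ k, minLen S s = k + 1 :=
    Nat.exists_eq_succ_of_ne_zero fun h0 => hs0 (by simpa [h0] using h)
  rw [hk, succ_nsmul] at h
  exact ⟨k, hk, h⟩

theorem single_one_mem_atoms {i : ι} (h : Finsupp.single i 1 ∈ S) :
    Finsupp.single i 1 ∈ Atoms S := by
  refine ⟨⟨h, by simp⟩, ?_⟩
  rintro ⟨u, hu, v, hv, huv⟩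
  have := congrArg Finsupp.degree huv
  rw [map_add, Finsupp.degree_single] at this
  have hu' := mt (Finsupp.degree_eq_zero_iff u).1 hu.2
  have hv' := mt (Finsupp.degree_eq_zero_iff v).1 hv.2
  omega

theorem exists_add_of_mem_nsmul_of_apply_pos {X : Set (ι →₀ ℕ)} (i : ι) :
    ∀ {n : ℕ} {t : ι →₀ ℕ}, t ∈ n • X → 0 < t i →
      ∃ k, n = k + 1 ∧ ∃ r ∈ k • X, ∃ b ∈ X, 0 < b i ∧ t = r + b
  | 0, t, ht, hti => by simp_all
  | n + 1, _, ht, hti => by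
    rw [succ_nsmul] at ht
    obtain ⟨r, hr, b, hb, rfl⟩ := ht
    by_cases hbi : 0 < b i
    · exact ⟨n, rfl, r, hr, b, hb, hbi, rfl⟩
    have hri : 0 < r i := by
      simp only [Finsupp.coe_add, Pi.add_apply] at hti
      omega
    obtain ⟨k, rfl, r₀, hr₀, b₀, hb₀, hb₀i, rfl⟩ := exists_add_of_mem_nsmul_of_apply_pos i hr hri
    refine ⟨k + 1, rfl, r₀ + b, succ_nsmul X k ▸ Set.add_mem_add hr₀ hb, b₀, hb₀, hb₀i, ?_⟩
    exact add_right_comm _ _ _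

variable (hGA : Gaps S + Atoms S ⊆ Atoms S ∪ (Atoms S + Atoms S))
include hGA

theorem add_mem_of_ne_zero {s : ι →₀ ℕ} (hs : s ∈ S) (hs0 : s ≠ 0) (x : ι →₀ ℕ) : s + x ∈ S := by
  obtain ⟨k, -, r, hr, a, ha, rfl⟩ := exists_eq_add_atom hs hs0
  exact add_atom_add_mem hGA (nsmul_atoms_subset k hr) ha x

theorem mem_atoms_of_add_mem_atoms {x c : ι →₀ ℕ} (h : x + c ∈ Atoms S) (hc : c ∈ S)
    (hc0 : c ≠ 0) : c ∈ Atoms S := by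
  refine ⟨⟨hc, hc0⟩, ?_⟩
  rintro ⟨u, hu, v, hv, rfl⟩
  have hvx : v + x ∈ Sstar S :=
    ⟨add_mem_of_ne_zero hGA hv.1 hv.2 x, fun h => hv.2 (add_eq_zero.1 h).1⟩
  exact h.2 ⟨u, hu, v + x, hvx, by rw [add_comm x, add_assoc]⟩

theorem minLen_le_minLen_add_single {s : ι →₀ ℕ} (hs : s ∈ S) (i : ι) :
    minLen S s ≤ minLen S (s + Finsupp.single i 1) := by
  rcases eq_or_ne s 0 with rfl | hs0
  · simp [minLen_zero]
  have ht := mem_nsmul_minLen_of_mem (add_mem_of_ne_zero hGA hs hs0 (Finsupp.single i 1))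
  obtain ⟨k, hk, r, hr, b, hb, hbi, hrb⟩ := exists_add_of_mem_nsmul_of_apply_pos i ht (by simp)
  obtain ⟨c, rfl⟩ := exists_add_of_le (Finsupp.single_le_iff.2 (Nat.succ_le_of_lt hbi))
  have hsrc : s = r + c := by
    apply add_right_cancel (b := Finsupp.single i 1)
    rw [hrb, add_comm _ c, add_assoc]
  rw [hk, hsrc]
  by_cases hcS : c ∈ S
  · rcases eq_or_ne c 0 with rfl | hc0
    · exact (minLen_le_of_mem (by simpa using hr)).trans (by omega)
    · have hc := mem_atoms_of_add_mem_atoms hGA hb hcS hc0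
      exact minLen_le_of_mem (succ_nsmul (Atoms S) k ▸ Set.add_mem_add hr hc)
  -- the gap `c` is absorbed by an atom of `r`, which has one since `r + c ∈ S`
  have hr0 : r ≠ 0 := by
    rintro rfl
    exact hcS (by simpa [hsrc] using hs)
  obtain ⟨k', rfl⟩ : ∃ k', k = k' + 1 :=
    Nat.exists_eq_succ_of_ne_zero fun h0 => hr0 (by simpa [h0] using hr)
  rw [succ_nsmul] at hr
  obtain ⟨r', hr', a, ha, rfl⟩ := hr
  rw [add_assoc, add_comm a]
  exact minLen_add_notMem_add_atom_le hGA hr' hcS ha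

theorem minLen_add_single_le {s : ι →₀ ℕ} (hs : s ∈ S) (i : ι) :
    minLen S (s + Finsupp.single i 1) ≤ minLen S s + 1 := by
  by_cases he : Finsupp.single i 1 ∈ S
  · exact minLen_le_of_mem (succ_nsmul (Atoms S) _ ▸
      Set.add_mem_add (mem_nsmul_minLen_of_mem hs) (single_one_mem_atoms he))
  rcases eq_or_ne s 0 with rfl | hs0
  · simp [minLen_eq_zero_of_notMem he]
  obtain ⟨k, hk, r, hr, a, ha, rfl⟩ := exists_eq_add_atom hs hs0
  rw [hk, add_assoc, add_comm a]
  exact minLen_add_notMem_add_atom_le hGA hr he ha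

theorem minLen_le_minLen_add {s : ι →₀ ℕ} (hs : s ∈ S) (x : ι →₀ ℕ) :
    minLen S s ≤ minLen S (s + x) := by
  rcases eq_or_ne s 0 with rfl | hs0
  · simp [minLen_zero]
  induction x using WellFoundedLT.induction with
  | _ x ih =>
  rcases eq_or_ne x 0 with rfl | hx0
  · simp
  obtain ⟨i, hi⟩ := Finsupp.ne_iff.1 hx0
  obtain ⟨y, rfl⟩ := exists_add_of_le (Finsupp.single_le_iff.2 (Nat.one_le_iff_ne_zero.2 hi))
  have hy : y < Finsupp.single i 1 + y := lt_add_of_pos_left y (pos_iff_ne_zero.2 (by simp))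
  calc minLen S s ≤ minLen S (s + y) := ih y hy
    _ ≤ minLen S (s + y + Finsupp.single i 1) :=
      minLen_le_minLen_add_single hGA (add_mem_of_ne_zero hGA hs hs0 y) i
    _ = minLen S (s + (Finsupp.single i 1 + y)) := by rw [add_assoc, add_comm y]

end Finsupp

theorem statement7_general (I : Set ℕ) (S : AddSubmonoid (↥I →₀ ℕ))
    (hS : IsGapAbsorbing S) :
    ∀ s ∈ S,
      (∀ i : ↥I, minLen S s ≤ minLen S (s + Finsupp.single i 1) ∧
        minLen S (s + Finsupp.single i 1) ≤ minLen S s + 1) ∧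
      ∀ x : ↥I →₀ ℕ, minLen S s ≤ minLen S (s + x) :=
  fun _ hs => ⟨fun i => ⟨minLen_le_minLen_add_single hS.2 hs i, minLen_add_single_le hS.2 hs i⟩,
    minLen_le_minLen_add hS.2 hs⟩

theorem statement7 (I : Set ℕ) (hI : I.Nonempty) (S : AddSubmonoid (↥I →₀ ℕ))
    (hS : IsGapAbsorbing S) :
    ∀ s ∈ S,
      (∀ i : ↥I, minLen S s ≤ minLen S (s + Finsupp.single i 1) ∧
        minLen S (s + Finsupp.single i 1) ≤ minLen S s + 1) ∧
      ∀ x : ↥I →₀ ℕ, minLen S s ≤ minLen S (s + x) :=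
  statement7_general I S hS
end

section
/- Let I be a nonempty set of non-negative integers and let S be a submonoid of ℕ^(I). Then S is gap absorbing if and only if S is an ideal extension of ℕ^(I) and for every a, b ∈ A(S) and every i in the support of a ∨ b (the componentwise maximum of a and b), the inequality ℓ(a + b − e_i) ≤ 2 holds. -/
/-!
If `S` is gap absorbing and `s = a + t` with `a` an atom, then for a gap `x` the element `x + a`
is a sum of at most two atoms, so `s + x ∈ S*`: `S` is an ideal extension. In an ideal extension
atoms are downward closed in `S*`, so removing `e_i` from `a + b` leaves `h + b` with `h` a gap,
`0` or an atom, which gives `ℓ ≤ 2`.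

Conversely, in an ideal extension satisfying the length condition, the sums of one or two atoms
form a downward closed subset of `S*`: walk down from `a + b` one unit vector at a time. Every gap
lies below an atom (a minimal element of `S*` above it), so a sum of two gaps, or of a gap and an
atom, that lies in `S` lies below a sum of two atoms.
-/

open Pointwise

section AddCommMonoid

variable {M : Type*} [AddCommMonoid M]

@[simp] lemma nfold_one (X : Set M) : nfold 1 X = X := by simp [nfold]

@[simp] lemma nfold_two (X : Set M) : nfold 2 X = X + X := by simp [nfold]

variable {S : AddSubmonoid M} {s : M}

def OneOrTwoAtomSums (S : AddSubmonoid M) : Set M := Atoms S ∪ (Atoms S + Atoms S)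

lemma minLen_le_two_of_mem (hs : s ∈ OneOrTwoAtomSums S) : minLen S s ≤ 2 := by
  rcases hs with hs | hs
  · exact (Nat.sInf_le (by simpa [Lset] using hs)).trans one_le_two
  · exact Nat.sInf_le (by simpa [Lset] using hs)

end AddCommMonoid

section CanonicallyOrderedAdd

variable {M : Type*} [AddCommMonoid M] [PartialOrder M] [CanonicallyOrderedAdd M]
  {S : AddSubmonoid M} {s t a : M}

lemma add_mem_sstar (hs : s ∈ Sstar S) (ht : t ∈ S) : s + t ∈ Sstar S :=
  ⟨S.add_mem hs.1 ht, fun h => hs.2 (add_eq_zero.1 h).1⟩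

lemma oneOrTwoAtomSums_subset_sstar : OneOrTwoAtomSums S ⊆ Sstar S := by
  rintro _ (ha | ⟨a, ha, b, hb, rfl⟩)
  exacts [ha.1, add_mem_sstar ha.1 hb.1.1]

namespace IsIdealExtension

lemma mem_sstar_of_le (hS : IsIdealExtension S) (hs : s ∈ Sstar S) (hst : s ≤ t) :
    t ∈ Sstar S := by
  obtain ⟨u, rfl⟩ := le_iff_exists_add.1 hst
  exact hS s hs u

lemma mem_atoms_of_le (hS : IsIdealExtension S) (hs : s ∈ Sstar S) (ha : a ∈ Atoms S)
    (hsa : s ≤ a) : s ∈ Atoms S := by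
  refine ⟨hs, ?_⟩
  rintro ⟨u, hu, v, hv, rfl⟩
  obtain ⟨w, rfl⟩ := le_iff_exists_add.1 hsa
  exact ha.2 ⟨u, hu, v + w, hS v hv w, (add_assoc u v w).symm⟩

end IsIdealExtension

end CanonicallyOrderedAdd

section WellFounded

variable {M : Type*} [AddCommMonoid M] [PartialOrder M] [CanonicallyOrderedAdd M]
  [IsOrderedCancelAddMonoid M] [WellFoundedLT M] {S : AddSubmonoid M} {s a b c d : M}

lemma exists_atom_add_eq (hs : s ∈ Sstar S) : ∃ a ∈ Atoms S, ∃ t ∈ S, a + t = s := by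
  induction s using WellFoundedLT.induction with
  | _ s ih =>
  by_cases hsA : s ∈ Atoms S
  · exact ⟨s, hsA, 0, S.zero_mem, add_zero s⟩
  obtain ⟨u, hu, v, hv, rfl⟩ : s ∈ Sstar S + Sstar S := by
    by_contra h
    exact hsA ⟨hs, h⟩
  obtain ⟨a, ha, t, ht, rfl⟩ := ih u (lt_add_of_pos_right u (pos_iff_ne_zero.2 hv.2)) hu
  exact ⟨a, ha, t + v, S.add_mem ht hv.1, (add_assoc a t v).symm⟩

lemma exists_mem_nfold (hs : s ∈ S) : ∃ k, s ∈ nfold k (Atoms S) := by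
  induction s using WellFoundedLT.induction with
  | _ s ih =>
  by_cases h0 : s = 0
  · exact ⟨0, h0⟩
  obtain ⟨a, ha, t, ht, rfl⟩ := exists_atom_add_eq ⟨hs, h0⟩
  obtain ⟨k, hk⟩ := ih t (lt_add_of_pos_left t (pos_iff_ne_zero.2 ha.1.2)) ht
  exact ⟨k + 1, t, hk, a, ha, add_comm t a⟩

lemma minLen_le_two_iff (hs : s ∈ Sstar S) : minLen S s ≤ 2 ↔ s ∈ OneOrTwoAtomSums S := by
  refine ⟨fun h => ?_, minLen_le_two_of_mem⟩
  have hmem : minLen S s ∈ Lset S s := Nat.sInf_mem (exists_mem_nfold hs.1)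
  interval_cases hk : minLen S s
  · exact absurd hmem hs.2
  · exact Or.inl (by simpa [Lset] using hmem)
  · exact Or.inr (by simpa [Lset] using hmem)

namespace IsGapAbsorbing

lemma isIdealExtension (hS : IsGapAbsorbing S) : IsIdealExtension S := by
  intro s hs x
  by_cases hx : x ∈ S
  · exact add_mem_sstar hs hx
  obtain ⟨a, ha, t, ht, rfl⟩ := exists_atom_add_eq hs
  have hxa : x + a ∈ Sstar S := oneOrTwoAtomSums_subset_sstar (hS.2 (Set.add_mem_add hx ha))
  rw [add_right_comm, add_comm a x]
  exact add_mem_sstar hxa ht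

lemma mem_oneOrTwoAtomSums_of_add_eq (hS : IsGapAbsorbing S) (ha : a ∈ Atoms S)
    (hb : b ∈ Atoms S) (hda : d ≤ a) (hc : c + d = a + b) : c ∈ OneOrTwoAtomSums S := by
  obtain ⟨h, rfl⟩ := le_iff_exists_add'.1 hda
  obtain rfl : c = h + b := add_right_cancel (b := d) (by rw [hc, add_right_comm])
  by_cases hh : h ∈ S
  · by_cases h0 : h = 0
    · exact Or.inl (by rwa [h0, zero_add])
    · exact Or.inr (Set.add_mem_add
        (hS.isIdealExtension.mem_atoms_of_le ⟨hh, h0⟩ ha le_self_add) hb)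
  · exact hS.2 (Set.add_mem_add hh hb)

end IsGapAbsorbing

end WellFounded

namespace Finsupp

variable {ι : Type*}

lemma exists_add_single_eq_of_lt {y z : ι →₀ ℕ} (hzy : z < y) :
    ∃ i c, c + single i 1 = y ∧ z ≤ c := by
  obtain ⟨hle, i, hi⟩ := Finsupp.lt_def.1 hzy
  have hzi : z + single i 1 ≤ y := fun j => by
    rcases eq_or_ne i j with rfl | hij
    · simpa using hi
    · simpa [single_apply, hij] using hle j
  exact ⟨i, y - single i 1, tsub_add_cancel_of_le (le_add_self.trans hzi),
    le_tsub_of_add_le_right hzi⟩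

lemma le_of_add_eq_sup {u v d : ι →₀ ℕ} (h : u + v = u ⊔ d) : v ≤ d := fun j => by
  have := DFunLike.congr_fun h j
  simp only [coe_add, Pi.add_apply, sup_apply] at this
  omega

end Finsupp

section UnitVectors

variable {ι : Type*} {S : AddSubmonoid (ι →₀ ℕ)}

def MinLenAddSubSingleLeTwo (S : AddSubmonoid (ι →₀ ℕ)) : Prop :=
  ∀ a ∈ Atoms S, ∀ b ∈ Atoms S, ∀ i ∈ (a ⊔ b).support,
    ∀ c : ι →₀ ℕ, c + Finsupp.single i 1 = a + b → minLen S c ≤ 2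

lemma IsGapAbsorbing.minLenAddSubSingleLeTwo (hS : IsGapAbsorbing S) :
    MinLenAddSubSingleLeTwo S := by
  intro a ha b hb i hi c hc
  apply minLen_le_two_of_mem
  by_cases hai : a i = 0
  · have hbi : b i ≠ 0 := by simpa [hai] using hi
    exact hS.mem_oneOrTwoAtomSums_of_add_eq hb ha
      (Finsupp.single_le_iff.2 (Nat.one_le_iff_ne_zero.2 hbi)) (hc.trans (add_comm a b))
  · exact hS.mem_oneOrTwoAtomSums_of_add_eq ha hb
      (Finsupp.single_le_iff.2 (Nat.one_le_iff_ne_zero.2 hai)) hc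

namespace IsIdealExtension

lemma mem_oneOrTwoAtomSums_of_add_single_eq (hS : IsIdealExtension S)
    (hD : MinLenAddSubSingleLeTwo S) {y c : ι →₀ ℕ} {i : ι} (hy : y ∈ OneOrTwoAtomSums S)
    (hc : c ∈ Sstar S) (hcy : c + Finsupp.single i 1 = y) : c ∈ OneOrTwoAtomSums S := by
  rcases hy with hy | ⟨a, ha, b, hb, rfl⟩
  · exact Or.inl (hS.mem_atoms_of_le hc hy (hcy ▸ le_self_add))
  · refine (minLen_le_two_iff hc).1 (hD a ha b hb i ?_ c hcy)
    have := DFunLike.congr_fun hcy i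
    simp only [Finsupp.coe_add, Pi.add_apply, Finsupp.single_eq_same] at this
    simp only [Finsupp.mem_support_iff, Finsupp.sup_apply]
    omega

lemma mem_oneOrTwoAtomSums_of_le (hS : IsIdealExtension S) (hD : MinLenAddSubSingleLeTwo S)
    {y z : ι →₀ ℕ} (hy : y ∈ OneOrTwoAtomSums S) (hz : z ∈ Sstar S) (hzy : z ≤ y) :
    z ∈ OneOrTwoAtomSums S := by
  induction y using WellFoundedLT.induction with
  | _ y ih =>
  rcases hzy.eq_or_lt with rfl | hlt
  · exact hy
  obtain ⟨i, c, rfl, hzc⟩ := Finsupp.exists_add_single_eq_of_lt hlt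
  have hc := hS.mem_oneOrTwoAtomSums_of_add_single_eq hD hy (hS.mem_sstar_of_le hz hzc) rfl
  exact ih c (lt_add_of_pos_right c (by simp [pos_iff_ne_zero])) hc hzc

-- A minimal `b ∈ S*` above `d` is an atom: were `b = u + v`, minimality would give `u ⊔ d = b`,
-- hence `v ≤ d` and `d ∈ S`.
lemma exists_atom_ge_of_notMem (hS : IsIdealExtension S) {d z : ι →₀ ℕ} (hd : d ∉ S)
    (hz : z ∈ Sstar S) (hdz : d ≤ z) : ∃ b ∈ Atoms S, d ≤ b := by
  obtain ⟨b, ⟨hb, hdb⟩, hmin⟩ :=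
    wellFounded_lt.has_min {s | s ∈ Sstar S ∧ d ≤ s} ⟨z, hz, hdz⟩
  refine ⟨b, ⟨hb, ?_⟩, hdb⟩
  rintro ⟨u, hu, v, hv, rfl⟩
  have hud : u ⊔ d = u + v := (sup_le le_self_add hdb).eq_of_not_lt
    (hmin _ ⟨hS.mem_sstar_of_le hu le_sup_left, le_sup_right⟩)
  exact hd (hS.mem_sstar_of_le hv (Finsupp.le_of_add_eq_sup hud.symm)).1

theorem isGapAbsorbing (hS : IsIdealExtension S) (hD : MinLenAddSubSingleLeTwo S) :
    IsGapAbsorbing S := by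
  constructor
  · rintro _ ⟨g, hg, h, hh, rfl⟩
    by_cases hgh : g + h ∈ S
    · have hne : g + h ∈ Sstar S := ⟨hgh, fun h0 => hg ((add_eq_zero.1 h0).1 ▸ S.zero_mem)⟩
      obtain ⟨a, ha, hga⟩ := hS.exists_atom_ge_of_notMem hg hne le_self_add
      obtain ⟨b, hb, hhb⟩ := hS.exists_atom_ge_of_notMem hh hne le_add_self
      rcases hS.mem_oneOrTwoAtomSums_of_le hD (Or.inr (Set.add_mem_add ha hb)) hne
        (add_le_add hga hhb) with hab | hab
      exacts [Or.inl (Or.inr hab), Or.inr hab]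
    · exact Or.inl (Or.inl hgh)
  · rintro _ ⟨g, hg, a, ha, rfl⟩
    have hga : g + a ∈ Sstar S := add_comm a g ▸ hS a ha.1 g
    obtain ⟨b, hb, hgb⟩ := hS.exists_atom_ge_of_notMem hg hga le_self_add
    exact hS.mem_oneOrTwoAtomSums_of_le hD (Or.inr (Set.add_mem_add hb ha)) hga
      (add_le_add_left hgb a)

end IsIdealExtension

end UnitVectors

theorem statement9_general (I : Set ℕ) (S : AddSubmonoid (↥I →₀ ℕ)) :
    IsGapAbsorbing S ↔
      (IsIdealExtension S ∧
        ∀ a ∈ Atoms S, ∀ b ∈ Atoms S, ∀ i ∈ (a ⊔ b).support,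
          ∀ c : ↥I →₀ ℕ, c + Finsupp.single i 1 = a + b → minLen S c ≤ 2) :=
  ⟨fun hS => ⟨hS.isIdealExtension, hS.minLenAddSubSingleLeTwo⟩,
    fun ⟨hS, hD⟩ => hS.isGapAbsorbing hD⟩

theorem statement9 (I : Set ℕ) (hI : I.Nonempty) (S : AddSubmonoid (↥I →₀ ℕ)) :
    IsGapAbsorbing S ↔
      (IsIdealExtension S ∧
        ∀ a ∈ Atoms S, ∀ b ∈ Atoms S, ∀ i ∈ (a ⊔ b).support,
          ∀ c : ↥I →₀ ℕ, c + Finsupp.single i 1 = a + b → minLen S c ≤ 2) :=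
  statement9_general I S
end

section
/- Let I be a nonempty set of non-negative integers, let S be an ideal extension of ℕ^(I), let L = {i ∈ I : e_i ∈ S}, and let s ∈ C(S) = {x ∈ S : Supp(x) ⊆ I \ L} with ℓ(s) ≥ 3. Then s has a unique factorization into atoms if and only if s = 7e_i for some i ∈ I \ L with 2e_i ∈ C(S). -/
open Pointwise

section Factorizations

variable {M : Type*} [AddCommMonoid M] [PartialOrder M]

/-- The element represented by a factorization, i.e. a finitely supported
function from the atoms to `ℕ`. -/
noncomputable def factSum (S : AddSubmonoid M) (z : ↥(Atoms S) →₀ ℕ) : M :=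
  z.sum fun a n => n • (a : M)

/-- The set of factorizations of `s` into atoms of `S`. -/
noncomputable def Zset (S : AddSubmonoid M) (s : M) : Set (↥(Atoms S) →₀ ℕ) :=
  {z | factSum S z = s}

end Factorizations

/-!
Factorizations are handled as multisets of atoms. If `Z` is the unique factorization of `s`,
then every sub-multiset of `Z` is the only factorization of its sum, so an atom `a` with
`F.sum - a ∈ S` for some `F ≤ Z` must occur in `F`.

No `e_i` with `i ∈ Supp s` lies in `S`, so all atoms below `s` have degree at least `2`. In an
ideal extension, any `w ∈ S*` with `s - w ∈ S` and degree below twice the minimal degree `d` of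
the atoms of `Z` itself occurs in `Z`; adding one or two unit vectors to a minimal atom `a`
gives such elements. If `d ≥ 3`, then `a + (a + e_p + e_q) = (a + e_p) + (a + e_q)` is a second
factorization, so `d = 2`. Then `a + e_t ∈ Z` for every `t ∈ Supp s`, and for `t ≠ t'` the sum
`(a + e_t) + (a + e_t')` also factors through `a`. Hence `s = n e_i` and `a = 2 e_i`, and the
only atoms below `s` are `2 e_i` and `3 e_i`. Since `2 + 2 + 2 = 3 + 3`, `Z` contains at most two
copies of `2 e_i` and one of `3 e_i`; as it has at least three atoms, `n = 2 + 2 + 3 = 7`.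
-/

open Finsupp

namespace Multiset

variable {α : Type*}

lemma eq_replicate_add_replicate {F : Multiset α} {x y : α} (hxy : x ≠ y)
    (h : ∀ z ∈ F, z = x ∨ z = y) :
    ∃ p q, F = replicate p x + replicate q y := by
  classical
  refine ⟨F.count x, F.count y, ext.2 fun z => ?_⟩
  rw [count_add, count_replicate, count_replicate]
  by_cases hz : z ∈ F
  · rcases h z hz with rfl | rfl <;> simp [hxy, hxy.symm]
  · rw [count_eq_zero.2 hz]
    split_ifs <;> simp_all

lemma exists_pair_le_of_mem {Z : Multiset α} {a : α} (ha : a ∈ Z)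
    (hZ : 2 ≤ card Z) : ∃ b, {a, b} ≤ Z := by
  obtain ⟨R, rfl⟩ := exists_cons_of_mem ha
  obtain ⟨b, hb⟩ := exists_mem_of_ne_zero (s := R) (by rintro rfl; simp at hZ)
  exact ⟨b, cons_le_cons a (singleton_le.2 hb)⟩

end Multiset

namespace Finsupp

variable {ι : Type*}

lemma exists_eq_single_of_degree_eq_one {x : ι →₀ ℕ} (h : degree x = 1) :
    ∃ i, x = single i 1 := by
  obtain ⟨i, hi⟩ : x ∈ Set.range fun i => single i 1 := by rw [range_single_one]; exact h
  exact ⟨i, hi.symm⟩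

lemma exists_single_add_single_le {b : ι →₀ ℕ} (h : 2 ≤ degree b) :
    ∃ p q, single p 1 + single q 1 ≤ b := by
  obtain ⟨c, hcb, hc⟩ := exists_le_degree_eq b 2 h
  obtain ⟨e, hec, he⟩ := exists_le_degree_eq c 1 (by omega)
  obtain ⟨p, rfl⟩ := exists_eq_single_of_degree_eq_one he
  obtain ⟨q, hq⟩ : ∃ q, c - single p 1 = single q 1 := by
    refine exists_eq_single_of_degree_eq_one ?_
    have := congrArg degree (add_tsub_cancel_of_le hec)
    rw [map_add, degree_single] at this
    omega
  exact ⟨p, q, by rw [← hq, add_tsub_cancel_of_le hec]; exact hcb⟩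

lemma exists_mem_apply_ne_zero {F : Multiset (ι →₀ ℕ)} {t : ι} (h : F.sum t ≠ 0) :
    ∃ b ∈ F, b t ≠ 0 := by
  by_contra! hF
  refine h ?_
  rw [← applyAddHom_apply, map_multiset_sum]
  exact Multiset.sum_eq_zero (by simpa using hF)

lemma eq_single_apply_of_le_single {x : ι →₀ ℕ} {i : ι} {n : ℕ} (h : x ≤ single i n) :
    x = single i (x i) :=
  eq_single_iff.2 ⟨(support_mono h).trans support_single_subset, rfl⟩

end Finsupp

section Factorization

variable {M : Type*} [AddCommMonoid M] {S : AddSubmonoid M}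

def IsFactorization (S : AddSubmonoid M) (x : M) (F : Multiset M) : Prop :=
  (∀ a ∈ F, a ∈ Atoms S) ∧ F.sum = x

lemma IsFactorization.add {x y : M} {F G : Multiset M} (hF : IsFactorization S x F)
    (hG : IsFactorization S y G) : IsFactorization S (x + y) (F + G) :=
  ⟨fun a ha => (Multiset.mem_add.1 ha).elim (hF.1 a) (hG.1 a),
    by rw [Multiset.sum_add, hF.2, hG.2]⟩

lemma IsFactorization.cons {a x : M} {F : Multiset M} (ha : a ∈ Atoms S)
    (hF : IsFactorization S x F) : IsFactorization S (a + x) (a ::ₘ F) := by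
  simpa using (show IsFactorization S a {a} by simpa [IsFactorization]).add hF

lemma isFactorization_sum {F : Multiset M} (hF : ∀ a ∈ F, a ∈ Atoms S) :
    IsFactorization S F.sum F :=
  ⟨hF, rfl⟩

lemma IsFactorization.mem {x : M} {F : Multiset M} (hF : IsFactorization S x F) : x ∈ S :=
  hF.2 ▸ S.multiset_sum_mem F fun a ha => (hF.1 a ha).1.1

lemma factSum_eq_sum_map_val (z : ↥(Atoms S) →₀ ℕ) :
    factSum S z = ((toMultiset z).map Subtype.val).sum := by
  induction z using Finsupp.induction_linear with
  | zero => simp [factSum]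
  | add f g hf hg =>
    rw [factSum, sum_add_index' (by simp) (by simp [add_smul]), ← factSum, ← factSum, hf, hg]
    simp
  | single a n => simp [factSum, Multiset.map_nsmul, Multiset.sum_nsmul]

lemma existsUnique_mem_Zset_iff {s : M} :
    (∃! z, z ∈ Zset S s) ↔ ∃! F, IsFactorization S s F := by
  classical
  set φ : (↥(Atoms S) →₀ ℕ) → Multiset M := fun z => (toMultiset z).map Subtype.val
  have hφ : Function.Injective φ := fun z z' h => by
    simpa using congrArg Multiset.toFinsupp (Multiset.map_injective Subtype.val_injective h)
  have hsurj : ∀ F : Multiset M, (∀ a ∈ F, a ∈ Atoms S) → ∃ z, φ z = F := fun F hF =>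
    ⟨Multiset.toFinsupp (F.attach.map fun a => ⟨a.1, hF a.1 a.2⟩),
      by simp [φ, Multiset.map_map]⟩
  have hZ : ∀ z, z ∈ Zset S s ↔ IsFactorization S s (φ z) := fun z => by
    have hφ_atoms : ∀ a ∈ φ z, a ∈ Atoms S := fun a ha => by
      obtain ⟨b, -, rfl⟩ := Multiset.mem_map.1 ha
      exact b.2
    rw [Zset, Set.mem_ofPred_eq, factSum_eq_sum_map_val]
    exact ⟨fun h => ⟨hφ_atoms, h⟩, And.right⟩
  constructor
  · rintro ⟨z, hz, hu⟩
    refine ⟨φ z, (hZ z).1 hz, fun F hF => ?_⟩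
    obtain ⟨z', rfl⟩ := hsurj F hF.1
    rw [hu z' ((hZ z').2 hF)]
  · rintro ⟨F, hF, hu⟩
    obtain ⟨z, rfl⟩ := hsurj F hF.1
    exact ⟨z, (hZ z).2 hF, fun z' hz' => hφ (hu _ ((hZ z').1 hz'))⟩

lemma IsFactorization.mem_nfold {x : M} {F : Multiset M} (hF : IsFactorization S x F) :
    x ∈ nfold (Multiset.card F) (Atoms S) := by
  induction F using Multiset.induction generalizing x with
  | empty => simp [nfold, ← hF.2]
  | cons a F ih =>
    rw [Multiset.card_cons, ← hF.2, Multiset.sum_cons, add_comm a]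
    have hF' := isFactorization_sum fun b hb => hF.1 b (Multiset.mem_cons_of_mem hb)
    exact Set.add_mem_add (ih hF') (hF.1 a (Multiset.mem_cons_self a F))

lemma minLen_le_card {x : M} {F : Multiset M} (hF : IsFactorization S x F) :
    minLen S x ≤ Multiset.card F :=
  Nat.sInf_le hF.mem_nfold

lemma dvdS_sum_of_le {s : M} {Z F : Multiset M} (hZ : IsFactorization S s Z) (hF : F ≤ Z) :
    dvdS S F.sum s := by
  obtain ⟨R, rfl⟩ := Multiset.le_iff_exists_add.1 hF
  exact ⟨R.sum, (isFactorization_sum fun a ha => hZ.1 a (Multiset.mem_add.2 (Or.inr ha))).mem,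
    by rw [← Multiset.sum_add, hZ.2]⟩

end Factorization

section UniqueFactorization

variable {M : Type*} [AddCommMonoid M] [PartialOrder M] [CanonicallyOrderedAdd M]
  {S : AddSubmonoid M}

lemma IsIdealExtension.mem_sstar_of_le_s12 (hS : IsIdealExtension S) {x y : M} (hx : x ∈ Sstar S)
    (hxy : x ≤ y) : y ∈ Sstar S := by
  obtain ⟨c, rfl⟩ := exists_add_of_le hxy
  exact hS x hx c

variable [IsOrderedCancelAddMonoid M] [WellFoundedLT M]

theorem exists_isFactorization {x : M} (hx : x ∈ S) : ∃ F, IsFactorization S x F := by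
  induction x using WellFoundedLT.induction with
  | ind x ih =>
    by_cases hx0 : x = 0
    · exact ⟨0, by simp [IsFactorization, hx0]⟩
    by_cases hxa : x ∈ Atoms S
    · exact ⟨{x}, by simpa [IsFactorization]⟩
    obtain ⟨u, hu, v, hv, rfl⟩ : x ∈ Sstar S + Sstar S := by
      by_contra h
      exact hxa ⟨⟨hx, hx0⟩, h⟩
    obtain ⟨F, hF⟩ := ih u (lt_add_of_pos_right u (pos_iff_ne_zero.2 hv.2)) hu.1
    obtain ⟨G, hG⟩ := ih v (lt_add_of_pos_left v (pos_iff_ne_zero.2 hu.2)) hv.1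
    exact ⟨F + G, hF.add hG⟩

variable {s w : M} {Z F G : Multiset M}

lemma IsFactorization.le_of_dvdS (huniq : ∀ F, IsFactorization S s F → F = Z)
    (hw : dvdS S w s) (hF : IsFactorization S w F) : F ≤ Z := by
  obtain ⟨t, ht, rfl⟩ := hw
  obtain ⟨H, hH⟩ := exists_isFactorization ht
  exact huniq _ (hF.add hH) ▸ Multiset.le_add_right F H

lemma IsFactorization.eq_of_dvdS (huniq : ∀ F, IsFactorization S s F → F = Z)
    (hw : dvdS S w s) (hF : IsFactorization S w F) (hG : IsFactorization S w G) : F = G := by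
  obtain ⟨t, ht, rfl⟩ := hw
  obtain ⟨H, hH⟩ := exists_isFactorization ht
  exact add_right_cancel ((huniq _ (hF.add hH)).trans (huniq _ (hG.add hH)).symm)

lemma mem_of_le_of_dvdS_sum (hZ : IsFactorization S s Z)
    (huniq : ∀ F, IsFactorization S s F → F = Z) (hF : F ≤ Z) {a : M} (ha : a ∈ Atoms S)
    (h : dvdS S a F.sum) : a ∈ F := by
  obtain ⟨t, ht, hsum⟩ := h
  obtain ⟨H, hH⟩ := exists_isFactorization ht
  have hFfact := isFactorization_sum fun b hb => hZ.1 b (Multiset.mem_of_le hF hb)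
  have hcons : IsFactorization S F.sum (a ::ₘ H) := hsum ▸ hH.cons ha
  rw [hFfact.eq_of_dvdS huniq (dvdS_sum_of_le hZ hF) hcons]
  exact Multiset.mem_cons_self a H

end UniqueFactorization

section IdealExtension

variable {ι : Type*} {S : AddSubmonoid (ι →₀ ℕ)}

lemma two_le_degree_of_mem_sstar {s u : ι →₀ ℕ} (hcore : ∀ i ∈ s.support, single i 1 ∉ S)
    (hu : u ∈ Sstar S) (hle : u ≤ s) : 2 ≤ degree u := by
  have h0 : degree u ≠ 0 := fun h => hu.2 ((degree_eq_zero_iff u).1 h)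
  by_contra! h
  obtain ⟨i, rfl⟩ := exists_eq_single_of_degree_eq_one (show degree u = 1 by omega)
  exact hcore i (support_mono hle (by simp)) hu.1

lemma mem_atoms_of_degree_le_three {x : ι →₀ ℕ} (hx : x ∈ Sstar S)
    (hcore : ∀ i ∈ x.support, single i 1 ∉ S) (hdeg : degree x ≤ 3) : x ∈ Atoms S := by
  refine ⟨hx, ?_⟩
  rintro ⟨u, hu, v, hv, rfl⟩
  have hu2 := two_le_degree_of_mem_sstar hcore hu le_self_add
  have hv2 := two_le_degree_of_mem_sstar hcore hv le_add_self
  rw [map_add] at hdeg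
  omega

section Ray

variable {i : ι}

lemma single_mem_atoms_iff (hS : IsIdealExtension S) (h1 : single i 1 ∉ S)
    (h2 : single i 2 ∈ S) {k : ℕ} : single i k ∈ Atoms S ↔ k = 2 ∨ k = 3 := by
  have h2' : single i 2 ∈ Sstar S := ⟨h2, by simp⟩
  constructor
  · intro ha
    have hk0 : k ≠ 0 := by rintro rfl; exact ha.1.2 (single_zero i)
    have hk1 : k ≠ 1 := by rintro rfl; exact h1 ha.1.1
    by_contra hk
    refine ha.2 ⟨single i 2, h2', single i (k - 2), hS.mem_sstar_of_le_s12 h2' ?_, ?_⟩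
    · exact single_le_single.2 (by omega)
    · show single i 2 + single i (k - 2) = single i k
      rw [← single_add]
      congr 1
      omega
  · intro hk
    have hx : single i k ∈ Sstar S := hS.mem_sstar_of_le_s12 h2' (single_le_single.2 (by omega))
    refine mem_atoms_of_degree_le_three hx (fun j hj => ?_) (by rw [degree_single]; omega)
    rwa [Finset.mem_singleton.1 (support_single_subset hj)]

lemma isFactorization_single_iff (hS : IsIdealExtension S) (h1 : single i 1 ∉ S)
    (h2 : single i 2 ∈ S) {n : ℕ} {F : Multiset (ι →₀ ℕ)} :
    IsFactorization S (single i n) F ↔ ∃ p q,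
      F = Multiset.replicate p (single i 2) + Multiset.replicate q (single i 3) ∧
        2 * p + 3 * q = n := by
  constructor
  · intro hF
    have hF23 : ∀ x ∈ F, x = single i 2 ∨ x = single i 3 := fun x hx => by
      have hxs := eq_single_apply_of_le_single (hF.2 ▸ Multiset.le_sum_of_mem hx)
      have hat := hF.1 x hx
      rw [hxs] at hat ⊢
      rcases (single_mem_atoms_iff hS h1 h2).1 hat with h | h <;> simp [h]
    obtain ⟨p, q, rfl⟩ :=
      Multiset.eq_replicate_add_replicate ((single_injective i).ne (by decide)) hF23
    refine ⟨p, q, rfl, single_injective i ?_⟩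
    rw [← hF.2]
    simp only [Multiset.sum_add, Multiset.sum_replicate, smul_single, smul_eq_mul, single_add,
      mul_comm]
  · rintro ⟨p, q, rfl, rfl⟩
    refine ⟨fun x hx => ?_, ?_⟩
    · rcases Multiset.mem_add.1 hx with hx | hx <;> rw [Multiset.eq_of_mem_replicate hx] <;>
        simp [single_mem_atoms_iff hS h1 h2]
    · simp only [Multiset.sum_add, Multiset.sum_replicate, smul_single, smul_eq_mul, single_add,
        mul_comm]

lemma eq_seven_of_isFactorization_single (hS : IsIdealExtension S) (h1 : single i 1 ∉ S)
    (h2 : single i 2 ∈ S) {n : ℕ} {Z : Multiset (ι →₀ ℕ)}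
    (hZ : IsFactorization S (single i n) Z)
    (huniq : ∀ F, IsFactorization S (single i n) F → F = Z) (hcard : 3 ≤ Multiset.card Z) :
    n = 7 := by
  have hat := fun k => (single_mem_atoms_iff hS h1 h2 (k := k)).2
  obtain ⟨p, q, rfl, rfl⟩ := (isFactorization_single_iff hS h1 h2).1 hZ
  have hp : p ≤ 2 := by
    by_contra hp
    have hle := ((Multiset.replicate_le_replicate (single i 2)).2 (by omega : 3 ≤ p)).trans
      (Multiset.le_add_right _ (Multiset.replicate q (single i 3)))
    have hdvd : dvdS S (single i 3) (Multiset.replicate 3 (single i 2)).sum :=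
      ⟨single i 3, (hat 3 (by simp)).1.1, by simp [← single_add]⟩
    exact (single_injective i).ne (by decide) <|
      Multiset.eq_of_mem_replicate (mem_of_le_of_dvdS_sum hZ huniq hle (hat 3 (by simp)) hdvd)
  have hq : q ≤ 1 := by
    by_contra hq
    have hle := ((Multiset.replicate_le_replicate (single i 3)).2 (by omega : 2 ≤ q)).trans
      (Multiset.le_add_left _ (Multiset.replicate p (single i 2)))
    have hdvd : dvdS S (single i 2) (Multiset.replicate 2 (single i 3)).sum :=
      ⟨single i 4, hS.mem_sstar_of_le_s12 ⟨h2, by simp⟩ (by simp) |>.1,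
        by simp [← single_add]⟩
    exact (single_injective i).ne (by decide) <|
      Multiset.eq_of_mem_replicate (mem_of_le_of_dvdS_sum hZ huniq hle (hat 2 (by simp)) hdvd)
  simp only [Multiset.card_add, Multiset.card_replicate] at hcard
  omega

theorem existsUnique_isFactorization_single_seven (hS : IsIdealExtension S)
    (h1 : single i 1 ∉ S) (h2 : single i 2 ∈ S) :
    ∃! F, IsFactorization S (single i 7) F := by
  refine ⟨_, (isFactorization_single_iff hS h1 h2).2 ⟨2, 1, rfl, rfl⟩, fun F hF => ?_⟩
  obtain ⟨p, q, rfl, hpq⟩ := (isFactorization_single_iff hS h1 h2).1 hF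
  obtain ⟨rfl, rfl⟩ : p = 2 ∧ q = 1 := by omega
  rfl

end Ray

end IdealExtension

section UniqueFactorizationFinsupp

variable {ι : Type*} {S : AddSubmonoid (ι →₀ ℕ)} {s : ι →₀ ℕ} {Z : Multiset (ι →₀ ℕ)}

lemma two_le_degree_of_mem (hcore : ∀ i ∈ s.support, single i 1 ∉ S)
    (hZ : IsFactorization S s Z) {x : ι →₀ ℕ} (hx : x ∈ Z) : 2 ≤ degree x :=
  two_le_degree_of_mem_sstar hcore (hZ.1 x hx).1 (hZ.2 ▸ Multiset.le_sum_of_mem hx)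

lemma mem_of_degree_lt_two_mul (huniq : ∀ F, IsFactorization S s F → F = Z) {d : ℕ}
    (hmin : ∀ x ∈ Z, d ≤ degree x) {w : ι →₀ ℕ} (hw : w ∈ Sstar S) (hws : dvdS S w s)
    (hdeg : degree w < 2 * d) : w ∈ Z := by
  obtain ⟨F, hF⟩ := exists_isFactorization hw.1
  have hFZ := hF.le_of_dvdS huniq hws
  have hcardF : Multiset.card F * d ≤ degree w := by
    rw [← hF.2, map_multiset_sum, ← Multiset.card_map degree F, ← smul_eq_mul]
    exact Multiset.card_nsmul_le_sum
      (by simpa using fun x hx => hmin x (Multiset.mem_of_le hFZ hx))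
  have hF0 : F ≠ 0 := by
    rintro rfl
    exact hw.2 (by simpa using hF.2.symm)
  obtain ⟨x, rfl⟩ : ∃ x, F = {x} := Multiset.card_eq_one.1 <| by
    have := Multiset.card_pos.2 hF0
    have : Multiset.card F < 2 := by nlinarith
    omega
  rw [← hF.2, Multiset.sum_singleton]
  exact Multiset.singleton_le.1 hFZ

lemma add_mem_of_pair_le (hS : IsIdealExtension S) (hZ : IsFactorization S s Z)
    (huniq : ∀ F, IsFactorization S s F → F = Z) {d : ℕ} (hmin : ∀ x ∈ Z, d ≤ degree x)
    (hcard : 3 ≤ Multiset.card Z) {a b v : ι →₀ ℕ} (hab : {a, b} ≤ Z) (hv : v ≤ b)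
    (hdeg : degree (a + v) < 2 * d) : a + v ∈ Z := by
  obtain ⟨R, rfl⟩ := Multiset.le_iff_exists_add.1 hab
  obtain ⟨c, hc⟩ : ∃ c, c ∈ R := Multiset.exists_mem_of_ne_zero <| by
    rintro rfl
    simp at hcard
  have hcS : c ∈ Sstar S := (hZ.1 c (by simp [hc])).1
  obtain ⟨b', rfl⟩ := exists_add_of_le hv
  have hsum : a + v + (b' + R.sum) = s := by
    rw [← hZ.2, Multiset.sum_add, Multiset.insert_eq_cons, Multiset.sum_cons,
      Multiset.sum_singleton]
    abel
  have hrest : b' + R.sum ∈ S :=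
    (hS.mem_sstar_of_le_s12 hcS ((Multiset.le_sum_of_mem hc).trans le_add_self)).1
  exact mem_of_degree_lt_two_mul huniq hmin (hS.mem_sstar_of_le_s12 (hZ.1 a (by simp)).1 le_self_add)
    ⟨b' + R.sum, hrest, hsum⟩ hdeg

lemma degree_eq_two_of_forall_degree_le (hS : IsIdealExtension S)
    (hcore : ∀ i ∈ s.support, single i 1 ∉ S) (hZ : IsFactorization S s Z)
    (huniq : ∀ F, IsFactorization S s F → F = Z) (hcard : 3 ≤ Multiset.card Z) {a : ι →₀ ℕ}
    (ha : a ∈ Z) (hmin : ∀ x ∈ Z, degree a ≤ degree x) : degree a = 2 := by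
  have ha2 := two_le_degree_of_mem hcore hZ ha
  by_contra hd
  obtain ⟨b, hab⟩ := Multiset.exists_pair_le_of_mem ha (by omega)
  have hb : b ∈ Z := Multiset.mem_of_le hab (by simp)
  obtain ⟨p, q, hpq⟩ := exists_single_add_single_le (two_le_degree_of_mem hcore hZ hb)
  have hmem : ∀ v ≤ single p 1 + single q 1, a + v ∈ Z := fun v hv =>
    add_mem_of_pair_le hS hZ huniq hmin hcard hab (hv.trans hpq) <| by
      have := degree_mono hv
      simp only [map_add, degree_single] at this ⊢
      omega
  have hF : {a, a + (single p 1 + single q 1)} ≤ Z :=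
    (Multiset.cons_le_of_notMem (by simp)).2 ⟨ha, Multiset.singleton_le.2 (hmem _ le_rfl)⟩
  have hsum : a + single p 1 + (a + single q 1) =
      ({a, a + (single p 1 + single q 1)} : Multiset _).sum := by
    simp only [Multiset.insert_eq_cons, Multiset.sum_cons, Multiset.sum_singleton]
    abel
  have hp := mem_of_le_of_dvdS_sum hZ huniq hF (hZ.1 _ (hmem _ le_self_add))
    ⟨a + single q 1, (hZ.1 _ (hmem _ le_add_self)).1.1, hsum⟩
  simp only [Multiset.insert_eq_cons, Multiset.mem_cons, Multiset.mem_singleton] at hp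
  rcases hp with h | h <;> simpa using congrArg degree h

lemma add_single_mem_of_degree_eq_two (hS : IsIdealExtension S)
    (hcore : ∀ i ∈ s.support, single i 1 ∉ S) (hZ : IsFactorization S s Z)
    (huniq : ∀ F, IsFactorization S s F → F = Z) (hcard : 3 ≤ Multiset.card Z) {a : ι →₀ ℕ}
    (ha : a ∈ Z) (hdeg : degree a = 2) {t : ι} (ht : t ∈ s.support) : a + single t 1 ∈ Z := by
  obtain ⟨R, rfl⟩ := Multiset.exists_cons_of_mem ha
  have hadd : ∀ b ∈ R, ∀ t, b t ≠ 0 → a + single t 1 ∈ a ::ₘ R := fun b hb t hbt =>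
    add_mem_of_pair_le hS hZ huniq (fun x hx => two_le_degree_of_mem hcore hZ hx) hcard
      (Multiset.cons_le_cons a (Multiset.singleton_le.2 hb))
      (single_le_iff.2 (Nat.one_le_iff_ne_zero.2 hbt)) (by simp [hdeg])
  obtain ⟨b, hb⟩ := Multiset.exists_mem_of_ne_zero (s := R) (by rintro rfl; simp at hcard)
  obtain ⟨t₀, ht₀⟩ := support_nonempty_iff.2 (hZ.1 b (Multiset.mem_cons_of_mem hb)).1.2
  have h₀ : a + single t₀ 1 ∈ R :=
    (Multiset.mem_cons.1 (hadd b hb t₀ (mem_support_iff.1 ht₀))).resolve_left (by simp)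
  -- the rest `R` of the factorization dominates `a`, so it covers every coordinate of `s`
  have hle : a ≤ R.sum := le_self_add.trans (Multiset.le_sum_of_mem h₀)
  obtain ⟨b', hb', hb't⟩ := exists_mem_apply_ne_zero (F := R) (t := t) <| by
    have h := congrArg (· t) hZ.2
    have := hle t
    simp only [Multiset.sum_cons, coe_add, Pi.add_apply] at h
    rw [mem_support_iff] at ht
    omega
  exact hadd b' hb' t hb't

lemma eq_of_mem_support_of_degree_eq_two (hS : IsIdealExtension S)
    (hcore : ∀ i ∈ s.support, single i 1 ∉ S) (hZ : IsFactorization S s Z)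
    (huniq : ∀ F, IsFactorization S s F → F = Z) (hcard : 3 ≤ Multiset.card Z) {a : ι →₀ ℕ}
    (ha : a ∈ Z) (hdeg : degree a = 2) {t t' : ι} (ht : t ∈ s.support) (ht' : t' ∈ s.support) :
    t = t' := by
  by_contra htt
  have hmem := fun {t} (ht : t ∈ s.support) =>
    add_single_mem_of_degree_eq_two hS hcore hZ huniq hcard ha hdeg ht
  have hne : a + single t 1 ∉ ({a + single t' 1} : Multiset _) := by
    simpa [single_left_inj one_ne_zero] using htt
  have hF : {a + single t 1, a + single t' 1} ≤ Z :=
    (Multiset.cons_le_of_notMem hne).2 ⟨hmem ht, Multiset.singleton_le.2 (hmem ht')⟩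
  have hsum : a + (a + single t 1 + single t' 1) =
      ({a + single t 1, a + single t' 1} : Multiset _).sum := by
    simp only [Multiset.insert_eq_cons, Multiset.sum_cons, Multiset.sum_singleton]
    abel
  have ha' := mem_of_le_of_dvdS_sum hZ huniq hF (hZ.1 a ha)
    ⟨_, (hS.mem_sstar_of_le_s12 (hZ.1 a ha).1 (le_self_add.trans le_self_add)).1, hsum⟩
  simp [Multiset.insert_eq_cons] at ha'

end UniqueFactorizationFinsupp

theorem exists_eq_single_seven_of_existsUnique {ι : Type*} {S : AddSubmonoid (ι →₀ ℕ)}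
    {s : ι →₀ ℕ} (hS : IsIdealExtension S) (hcore : ∀ i ∈ s.support, single i 1 ∉ S)
    (hl : 3 ≤ minLen S s) (hu : ∃! F, IsFactorization S s F) :
    ∃ i, single i 1 ∉ S ∧ s = single i 7 ∧ single i 2 ∈ S := by
  obtain ⟨Z, hZ, huniq⟩ := hu
  have hcard : 3 ≤ Multiset.card Z := hl.trans (minLen_le_card hZ)
  obtain ⟨a, ha, hmin⟩ :=
    Multiset.exists_min_image degree (s := Z) (by rintro rfl; simp at hcard)
  have ha2 := degree_eq_two_of_forall_degree_le hS hcore hZ huniq hcard ha hmin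
  have has : a ≤ s := hZ.2 ▸ Multiset.le_sum_of_mem ha
  obtain ⟨i, hi⟩ := support_nonempty_iff.2 (ne_bot_of_le_ne_bot (hZ.1 a ha).1.2 has)
  have hs : s = single i (s i) := eq_single_iff.2 ⟨fun t ht => Finset.mem_singleton.2
    (eq_of_mem_support_of_degree_eq_two hS hcore hZ huniq hcard ha ha2 ht hi), rfl⟩
  have ha' : a = single i 2 := by
    have hai := eq_single_apply_of_le_single (hs ▸ has)
    rw [hai, degree_single] at ha2
    rw [hai, ha2]
  have h1 := hcore i hi
  have h2 : single i 2 ∈ S := ha' ▸ (hZ.1 a ha).1.1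
  rw [hs] at hZ huniq
  exact ⟨i, h1, by rw [hs, eq_seven_of_isFactorization_single hS h1 h2 hZ huniq hcard], h2⟩

theorem statement12_general (I : Set ℕ) (S : AddSubmonoid (↥I →₀ ℕ))
    (hS : IsIdealExtension S) (s : ↥I →₀ ℕ)
    (hcore : ∀ i ∈ s.support, Finsupp.single i (1 : ℕ) ∉ S)
    (hl : 3 ≤ minLen S s) :
    (∃! z : ↥(Atoms S) →₀ ℕ, z ∈ Zset S s) ↔
      ∃ i : ↥I, Finsupp.single i (1 : ℕ) ∉ S ∧
        s = Finsupp.single i 7 ∧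
        Finsupp.single i (2 : ℕ) ∈ S ∧
        ∀ j ∈ (Finsupp.single i (2 : ℕ)).support,
          Finsupp.single j (1 : ℕ) ∉ S := by
  rw [existsUnique_mem_Zset_iff]
  constructor
  · intro hu
    obtain ⟨i, h1, rfl, h2⟩ := exists_eq_single_seven_of_existsUnique hS hcore hl hu
    refine ⟨i, h1, rfl, h2, fun j hj => ?_⟩
    rwa [Finset.mem_singleton.1 (support_single_subset hj)]
  · rintro ⟨i, h1, rfl, h2, -⟩
    exact existsUnique_isFactorization_single_seven hS h1 h2

theorem statement12 (I : Set ℕ) (hI : I.Nonempty) (S : AddSubmonoid (↥I →₀ ℕ))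
    (hS : IsIdealExtension S) (s : ↥I →₀ ℕ) (hs : s ∈ S)
    (hcore : ∀ i ∈ s.support, Finsupp.single i (1 : ℕ) ∉ S)
    (hl : 3 ≤ minLen S s) :
    (∃! z : ↥(Atoms S) →₀ ℕ, z ∈ Zset S s) ↔
      ∃ i : ↥I, Finsupp.single i (1 : ℕ) ∉ S ∧
        s = Finsupp.single i 7 ∧
        Finsupp.single i (2 : ℕ) ∈ S ∧
        ∀ j ∈ (Finsupp.single i (2 : ℕ)).support,
          Finsupp.single j (1 : ℕ) ∉ S :=
  statement12_general I S hS s hcore hl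
end

section
/- Let I be a nonempty set of non-negative integers and let S be a submonoid of ℕ^(I) such that for every positive integer n, the set nA(S) \ (n−1)A(S) is closed under intervals. Then for every s ∈ S, the set of lengths L(s) is an interval of integers (equivalently, max Δ(S) ≤ 1). -/
open Pointwise

/-!
In a canonically ordered monoid the interval condition makes the minimal factorization length `ℓ`
monotone: if `x ≤ y` but `ℓ(y) = q < ℓ(x)`, split a shortest factorization of `x` as `u + v` with
`u ∈ qA(S)`; minimality of `ℓ(x)` forces `ℓ(u) = q`, so `u` and `y` both lie in the layer
`qA(S) \ (q-1)A(S)`, hence so does `x ∈ ⟦u, y⟧`, contradicting `q < ℓ(x)`.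
A factorization `s = u + a` of length `l + 1` can then be shortened to any length `m` with
`ℓ(s) < m ≤ l + 1`, by induction, because `ℓ(u) ≤ ℓ(s)`.
-/

section LengthSets

variable {M : Type*} [AddCommMonoid M]

lemma nfold_add (p q : ℕ) (X : Set M) : nfold (p + q) X = nfold p X + nfold q X := by
  induction q with
  | zero => exact (Set.singleton_zero (α := M) ▸ add_zero (nfold p X)).symm
  | succ q ih =>
    show nfold (p + q) X + X = nfold p X + (nfold q X + X)
    rw [ih, add_assoc]

variable (S : AddSubmonoid M) {x : M} {n : ℕ}

lemma minLen_le (h : x ∈ nfold n (Atoms S)) : minLen S x ≤ n := Nat.sInf_le h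

lemma mem_nfold_minLen (h : x ∈ nfold n (Atoms S)) : x ∈ nfold (minLen S x) (Atoms S) :=
  Nat.sInf_mem (s := Lset S x) ⟨n, h⟩

lemma notMem_nfold_of_lt_minLen (h : n < minLen S x) : x ∉ nfold n (Atoms S) :=
  fun hx => (minLen_le S hx).not_gt h

end LengthSets

section CanonicallyOrdered

variable {M : Type*} [AddCommMonoid M] [PartialOrder M] [CanonicallyOrderedAdd M]
  (S : AddSubmonoid M)
  (hS : ∀ n : ℕ, ClosedUnderIntervals (nfold (n + 1) (Atoms S) \ nfold n (Atoms S)))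
include hS

theorem minLen_mono {x y : M} (hxy : x ≤ y) {p q : ℕ}
    (hx : x ∈ nfold p (Atoms S)) (hy : y ∈ nfold q (Atoms S)) :
    minLen S x ≤ minLen S y := by
  by_contra! hlt
  have hy_min := mem_nfold_minLen S hy
  obtain hy0 | hy_pos := Nat.eq_zero_or_pos (minLen S y)
  · rw [hy0] at hy_min hlt
    have hx0 : x = 0 := nonpos_iff_eq_zero.mp (hxy.trans_eq hy_min)
    exact hlt.ne' (Nat.le_zero.mp (minLen_le S (n := 0) hx0))
  obtain ⟨q, hq⟩ : ∃ q, minLen S y = q + 1 := ⟨_, (Nat.succ_pred_eq_of_pos hy_pos).symm⟩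
  rw [hq] at hy_min hlt
  have hx_min := mem_nfold_minLen S hx
  rw [← Nat.add_sub_of_le hlt.le, nfold_add] at hx_min
  obtain ⟨u, hu, v, hv, rfl⟩ := Set.mem_add.mp hx_min
  have hu_min : minLen S u = q + 1 := by
    have : u + v ∈ nfold (minLen S u + (minLen S (u + v) - (q + 1))) (Atoms S) := by
      rw [nfold_add]
      exact Set.add_mem_add (mem_nfold_minLen S hu) hv
    have := minLen_le S this
    have := minLen_le S hu
    omega
  have hu_layer : u ∈ nfold (q + 1) (Atoms S) \ nfold q (Atoms S) :=
    ⟨hu, notMem_nfold_of_lt_minLen S (by omega)⟩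
  have hy_layer : y ∈ nfold (q + 1) (Atoms S) \ nfold q (Atoms S) :=
    ⟨hy_min, notMem_nfold_of_lt_minLen S (by omega)⟩
  have hx_layer := hS q u hu_layer y hy_layer (le_self_add.trans hxy)
    (⟨le_self_add, hxy⟩ : u + v ∈ Set.Icc u y)
  exact (minLen_le S hx_layer.1).not_gt hlt

theorem mem_nfold_of_minLen_le {l : ℕ} {s : M} (hs : s ∈ nfold l (Atoms S)) {m : ℕ}
    (hm : minLen S s ≤ m) (hml : m ≤ l) : s ∈ nfold m (Atoms S) := by
  induction l generalizing s m with
  | zero => rwa [Nat.le_zero.mp hml]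
  | succ l ih =>
    obtain rfl | hml := hml.eq_or_lt
    · exact hs
    obtain rfl | hlt := hm.eq_or_lt
    · exact mem_nfold_minLen S hs
    obtain ⟨u, hu, a, ha, rfl⟩ := Set.mem_add.mp hs
    obtain ⟨m, rfl⟩ : ∃ m', m = m' + 1 := ⟨m - 1, by omega⟩
    have := minLen_mono S hS le_self_add hu hs
    exact Set.add_mem_add (ih hu (by omega) (by omega)) ha

end CanonicallyOrdered

theorem statement15_general (I : Set ℕ) (S : AddSubmonoid (↥I →₀ ℕ))
    (hS : ∀ n : ℕ, ClosedUnderIntervals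
      (nfold (n + 1) (Atoms S) \ nfold n (Atoms S))) :
    ∀ s ∈ S, ∀ l ∈ Lset S s, ∀ l' ∈ Lset S s, ∀ m : ℕ,
      l ≤ m → m ≤ l' → m ∈ Lset S s := by
  intro s _ l hl l' hl' m hlm hml'
  exact mem_nfold_of_minLen_le S hS hl' ((minLen_le S hl).trans hlm) hml'

theorem statement15 (I : Set ℕ) (hI : I.Nonempty) (S : AddSubmonoid (↥I →₀ ℕ))
    (hS : ∀ n : ℕ, ClosedUnderIntervals
      (nfold (n + 1) (Atoms S) \ nfold n (Atoms S))) :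
    ∀ s ∈ S, ∀ l ∈ Lset S s, ∀ l' ∈ Lset S s, ∀ m : ℕ,
      l ≤ m → m ≤ l' → m ∈ Lset S s :=
  statement15_general I S hS
end
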